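/- arXiv:2405.02152 — 4 statements merged into one kernel-verified Lean document; each statement's English description precedes it below -/
import Mathlib

section
/- Let φ : 𝕋³ → ℝ be a continuous function with φ ≥ 0, φ(−x) = φ(x) for all x ∈ 𝕋³, and ∫_{𝕋³} φ(x) dx = 1. Let f : 𝕋³ → ℝ be integrable with f ≥ 0 a.e. and with f·log f integrable. Then ∫_{𝕋³} (φ ⋆ f)(x) · log((φ ⋆ f)(x)) dx ≤ ∫_{𝕋³} f(x) · log f(x) dx. -/
/-!
Jensen's inequality for the convex function `t ↦ t log t` and the probability measure
`φ (x - y) dy` gives `(φ ⋆ f)(x) log (φ ⋆ f)(x) ≤ ∫ φ (x - y) f(y) log f(y) dy` for each `x`.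
Integrating in `x` and exchanging the integrals, the mass `∫ φ (x - y) dx = 1` returns
`∫ f log f`.
-/

open MeasureTheory Real Function
open scoped ENNReal

/-- The three-dimensional torus `ℝ³/ℤ³`, with its Haar probability (volume) measure. -/
abbrev Torus3 : Type := Fin 3 → AddCircle (1 : ℝ)

section

variable {α : Type*} [MeasurableSpace α] {μ : Measure α}

theorem mul_log_integral_mul_le {ρ g : α → ℝ} (hρ0 : ∀ᵐ x ∂μ, 0 ≤ ρ x)
    (hρ1 : ∫ x, ρ x ∂μ = 1) (hg0 : ∀ᵐ x ∂μ, 0 ≤ g x) (hρg : Integrable (fun x => ρ x * g x) μ)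
    (hρgg : Integrable (fun x => ρ x * (g x * log (g x))) μ) :
    (∫ x, ρ x * g x ∂μ) * log (∫ x, ρ x * g x ∂μ) ≤ ∫ x, ρ x * (g x * log (g x)) ∂μ := by
  have hρm : AEMeasurable (fun x => (ρ x).toNNReal) μ :=
    (Integrable.of_integral_ne_zero (hρ1 ▸ one_ne_zero)).aemeasurable.real_toNNReal
  set ν := μ.withDensity fun x => ((ρ x).toNNReal : ℝ≥0∞)
  have hsmul (h : α → ℝ) : (fun x => (ρ x).toNNReal • h x) =ᵐ[μ] fun x => ρ x * h x := by
    filter_upwards [hρ0] with x hx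
    rw [NNReal.smul_def, Real.coe_toNNReal _ hx, smul_eq_mul]
  have hint (h : α → ℝ) : ∫ x, h x ∂ν = ∫ x, ρ x * h x ∂μ := by
    rw [integral_withDensity_eq_integral_smul₀ hρm]
    exact integral_congr_ae (hsmul h)
  have hintegrable {h : α → ℝ} (hh : Integrable (fun x => ρ x * h x) μ) : Integrable h ν := by
    rw [integrable_withDensity_iff_integrable_smul₀ hρm]
    exact hh.congr (hsmul h).symm
  have : IsProbabilityMeasure ν := by
    have hν1 := hint fun _ => 1
    simp only [integral_const, smul_eq_mul, mul_one, hρ1] at hν1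
    exact ⟨(ENNReal.toReal_eq_one_iff _).1 hν1⟩
  have hg0ν : ∀ᵐ x ∂ν, g x ∈ Set.Ici 0 := (withDensity_absolutelyContinuous μ _).ae_le hg0
  simpa only [hint] using convexOn_mul_log.map_integral_le continuous_mul_log.continuousOn
    isClosed_Ici hg0ν (hintegrable hρg) (hintegrable hρgg)

variable [SFinite μ] {K : α → α → ℝ}

theorem integrable_prod_kernel_mul (hK : AEStronglyMeasurable (uncurry K) (μ.prod μ))
    (hK0 : ∀ x y, 0 ≤ K x y) (hK1 : ∀ y, ∫ x, K x y ∂μ = 1) {g : α → ℝ} (hg : Integrable g μ) :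
    Integrable (fun p : α × α => K p.1 p.2 * g p.2) (μ.prod μ) := by
  have hKg : AEStronglyMeasurable (fun p : α × α => K p.1 p.2 * g p.2) (μ.prod μ) :=
    hK.mul hg.aestronglyMeasurable.comp_snd
  refine (integrable_prod_iff' hKg).2 ⟨ae_of_all _ fun y => ?_, ?_⟩
  · exact (Integrable.of_integral_ne_zero (hK1 y ▸ one_ne_zero)).mul_const (g y)
  · refine hg.norm.congr (ae_of_all _ fun y => ?_)
    simp only [norm_mul, Real.norm_of_nonneg (hK0 _ y), integral_mul_const, hK1, one_mul]

theorem integral_mul_log_kernel_le [IsFiniteMeasure μ]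
    (hK : AEStronglyMeasurable (uncurry K) (μ.prod μ)) (hK0 : ∀ x y, 0 ≤ K x y)
    (hK1 : ∀ x, ∫ y, K x y ∂μ = 1) (hK1' : ∀ y, ∫ x, K x y ∂μ = 1) {f : α → ℝ}
    (hf0 : ∀ᵐ y ∂μ, 0 ≤ f y) (hfi : Integrable f μ)
    (hflf : Integrable (fun y => f y * log (f y)) μ) :
    ∫ x, (∫ y, K x y * f y ∂μ) * log (∫ y, K x y * f y ∂μ) ∂μ ≤ ∫ y, f y * log (f y) ∂μ := by
  have hKf := integrable_prod_kernel_mul hK hK0 hK1' hfi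
  have hKflf := integrable_prod_kernel_mul hK hK0 hK1' hflf
  have jensen : ∀ᵐ x ∂μ, (∫ y, K x y * f y ∂μ) * log (∫ y, K x y * f y ∂μ) ≤
      ∫ y, K x y * (f y * log (f y)) ∂μ := by
    filter_upwards [hKf.prod_right_ae, hKflf.prod_right_ae] with x hx hx'
    exact mul_log_integral_mul_le (ae_of_all _ (hK0 x)) (hK1 x) hf0 hx hx'
  have lower : ∀ᵐ x ∂μ, (∫ y, K x y * f y ∂μ) - 1 ≤
      (∫ y, K x y * f y ∂μ) * log (∫ y, K x y * f y ∂μ) := ae_of_all _ fun x =>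
    self_sub_one_le_mul_log (integral_nonneg_of_ae (hf0.mono fun y hy => mul_nonneg (hK0 x y) hy))
  have hint : Integrable (fun x => (∫ y, K x y * f y ∂μ) * log (∫ y, K x y * f y ∂μ)) μ :=
    integrable_of_le_of_le
      (continuous_mul_log.comp_aestronglyMeasurable hKf.aestronglyMeasurable.integral_prod_right')
      lower jensen (hKf.integral_prod_left.sub (integrable_const 1)) hKflf.integral_prod_left
  calc _ ≤ ∫ x, ∫ y, K x y * (f y * log (f y)) ∂μ ∂μ :=
        integral_mono_ae hint hKflf.integral_prod_left jensen
    _ = ∫ y, f y * log (f y) ∂μ := by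
        simp only [integral_integral_swap (f := fun x y => K x y * (f y * log (f y))) hKflf,
          integral_mul_const, hK1', one_mul]

end

theorem entropy_convolution_le_general
    (φ : Torus3 → ℝ) (hφc : Continuous φ) (hφ0 : ∀ x, 0 ≤ φ x)
    (hφ1 : ∫ x, φ x = 1)
    (f : Torus3 → ℝ) (hfi : Integrable f) (hf0 : ∀ᵐ x, 0 ≤ f x)
    (hflf : Integrable (fun x => f x * Real.log (f x))) :
    ∫ x, (∫ y, φ (x - y) * f y) * Real.log (∫ y, φ (x - y) * f y) ≤
      ∫ x, f x * Real.log (f x) := by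
  have : (volume : Measure Torus3).IsNegInvariant := Measure.pi.isNegInvariant _
  refine integral_mul_log_kernel_le (K := fun x y => φ (x - y))
    (hφc.comp continuous_sub).aestronglyMeasurable (fun x y => hφ0 _) (fun x => ?_) (fun y => ?_)
    hf0 hfi hflf
  · rw [integral_sub_left_eq_self φ volume x, hφ1]
  · rw [integral_sub_right_eq_self φ y, hφ1]

/-- Mollifier entropy estimate (Proposition 3.1): for an even nonnegative continuous
kernel `φ` of unit mass on `𝕋³` and a nonnegative integrable `f` with `f log f`
integrable, the entropy of the convolution `φ ⋆ f` is at most the entropy of `f`. -/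
theorem entropy_convolution_le
    (φ : Torus3 → ℝ) (hφc : Continuous φ) (hφ0 : ∀ x, 0 ≤ φ x)
    (hφeven : ∀ x, φ (-x) = φ x) (hφ1 : ∫ x, φ x = 1)
    (f : Torus3 → ℝ) (hfi : Integrable f) (hf0 : ∀ᵐ x, 0 ≤ f x)
    (hflf : Integrable (fun x => f x * Real.log (f x))) :
    ∫ x, (∫ y, φ (x - y) * f y) * Real.log (∫ y, φ (x - y) * f y) ≤
      ∫ x, f x * Real.log (f x) :=
  entropy_convolution_le_general φ hφc hφ0 hφ1 f hfi hf0 hflf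
end

section
/- Let T > 0 and let μ be the product of Lebesgue measure on the interval (0,T) with the Haar probability measure on 𝕋³, a finite measure on (0,T)×𝕋³. Let f and f_n (n ∈ ℕ) be measurable real-valued functions on (0,T)×𝕋³ that are nonnegative μ-a.e., and assume: (i) ∫ (√(f_n) − √f)² dμ → 0 as n → ∞; (ii) there exists B such that ∫ f_n^{3/2} dμ ≤ B for all n; (iii) ∫ f^{3/2} dμ < ∞. Then there exists a strictly increasing sequence of indices (n_k) such that ∫ |f_{n_k}·log f_{n_k} − f·log f| dμ → 0 as k → ∞ (in particular, the entropies t ↦ ∫_{𝕋³} f_{n_k}(t,x) log f_{n_k}(t,x) dx converge in L¹(0,T) to t ↦ ∫_{𝕋³} f(t,x) log f(t,x) dx). -/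
/-!
Since `√fₙ → √f` in `L²`, the squared differences tend to `0` in `L¹`, hence in measure, so a
subsequence of `fₙ` converges to `f` almost everywhere, and along it `fₙ log fₙ → f log f` a.e.
As `|t log t| = o(t^{3/2})` at infinity, the uniform bound on `∫ fₙ^{3/2}` makes the family
`fₙ log fₙ` uniformly integrable (de la Vallée-Poussin), and Vitali's convergence theorem on the
finite measure space `(0,T) × 𝕋³` upgrades a.e. convergence to `L¹` convergence.
-/

open MeasureTheory Filter Topology

namespace Real

theorem exists_abs_mul_log_le_add_mul_rpow {p : ℝ} (hp : 1 < p) {a : ℝ} (ha : 0 < a) :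
    ∃ C, ∀ t, 0 ≤ t → |t * log t| ≤ C + a * t ^ p := by
  obtain ⟨N, hN⟩ := eventually_atTop.1 ((isLittleO_log_rpow_atTop (sub_pos.2 hp)).bound ha)
  obtain ⟨C, hC⟩ := (isCompact_Icc (a := 0) (b := max N 1)).exists_bound_of_continuousOn
    continuous_mul_log.continuousOn
  refine ⟨C, fun t ht => ?_⟩
  rcases le_or_gt t (max N 1) with htN | htN
  · have hCt : |t * log t| ≤ C := hC t ⟨ht, htN⟩
    have : 0 ≤ a * t ^ p := by positivity
    linarith
  · have ht0 : 0 < t := one_pos.trans_le (le_max_right N 1) |>.trans htN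
    have hlog : |log t| ≤ a * t ^ (p - 1) := by
      simpa [abs_of_pos (rpow_pos_of_pos ht0 _)] using hN t ((le_max_left N 1).trans htN.le)
    calc |t * log t| = t * |log t| := by rw [abs_mul, abs_of_pos ht0]
      _ ≤ t * (a * t ^ (p - 1)) := by gcongr
      _ = a * t ^ p := by rw [rpow_sub_one ht0.ne']; field_simp
      _ ≤ C + a * t ^ p := by
        have := (norm_nonneg _).trans (hC 0 ⟨le_rfl, zero_le_one.trans (le_max_right N 1)⟩)
        linarith

theorem self_le_one_add_rpow {p : ℝ} (hp : 1 ≤ p) {t : ℝ} (ht : 0 ≤ t) : t ≤ 1 + t ^ p := by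
  rcases le_or_gt t 1 with h | h
  · linarith [rpow_nonneg ht p]
  · linarith [self_le_rpow_of_one_le h.le hp]

theorem sq_sqrt_sub_sqrt_le_add {a b : ℝ} (ha : 0 ≤ a) (hb : 0 ≤ b) : (√a - √b) ^ 2 ≤ a + b := by
  nlinarith [sq_sqrt ha, sq_sqrt hb, sqrt_nonneg a, sqrt_nonneg b]

theorem tendsto_of_tendsto_sq_sqrt_sub_sqrt {ι : Type*} {l : Filter ι} {u : ι → ℝ} {b : ℝ}
    (hu : ∀ i, 0 ≤ u i) (hb : 0 ≤ b) (h : Tendsto (fun i => (√(u i) - √b) ^ 2) l (𝓝 0)) :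
    Tendsto u l (𝓝 b) := by
  have habs : Tendsto (fun i => |√(u i) - √b|) l (𝓝 0) := by
    simpa [Function.comp_def, sqrt_sq_eq_abs] using (continuous_sqrt.tendsto 0).comp h
  have hsqrt : Tendsto (fun i => √(u i)) l (𝓝 √b) :=
    tendsto_sub_nhds_zero_iff.1 ((tendsto_zero_iff_abs_tendsto_zero _).2 habs)
  simpa [sq_sqrt, hu, hb] using hsqrt.pow 2

end Real

namespace MeasureTheory

variable {α : Type*} [MeasurableSpace α] {μ : Measure α}

theorem Integrable.comp_of_abs_le_const_add_mul_rpow [IsFiniteMeasure μ] {Φ : ℝ → ℝ}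
    (hΦ : Continuous Φ) {C c p : ℝ} (hΦle : ∀ t, 0 ≤ t → |Φ t| ≤ C + c * t ^ p) {h : α → ℝ}
    (hm : AEStronglyMeasurable h μ) (h0 : 0 ≤ᵐ[μ] h) (hp : Integrable (fun x => h x ^ p) μ) :
    Integrable (fun x => Φ (h x)) μ := by
  refine ((integrable_const C).add (hp.const_mul c)).mono' (hΦ.comp_aestronglyMeasurable hm) ?_
  filter_upwards [h0] with x hx using hΦle _ hx

theorem integrable_of_integrable_rpow [IsFiniteMeasure μ] {p : ℝ} (hp : 1 ≤ p) {u : α → ℝ}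
    (hm : AEStronglyMeasurable u μ) (h0 : 0 ≤ᵐ[μ] u) (hup : Integrable (fun x => u x ^ p) μ) :
    Integrable u μ :=
  Integrable.comp_of_abs_le_const_add_mul_rpow continuous_id (C := 1) (c := 1)
    (fun t ht => by simpa [abs_of_nonneg ht] using Real.self_le_one_add_rpow hp ht) hm h0 hup

theorem integrable_mul_log_of_integrable_rpow [IsFiniteMeasure μ] {p : ℝ} (hp : 1 < p)
    {u : α → ℝ} (hm : AEStronglyMeasurable u μ) (h0 : 0 ≤ᵐ[μ] u)
    (hup : Integrable (fun x => u x ^ p) μ) : Integrable (fun x => u x * Real.log (u x)) μ :=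
  have ⟨_, hC⟩ := Real.exists_abs_mul_log_le_add_mul_rpow hp one_pos
  Integrable.comp_of_abs_le_const_add_mul_rpow Real.continuous_mul_log hC hm h0 hup

theorem Integrable.sq_sqrt_sub_sqrt {f g : α → ℝ} (hf : Integrable f μ) (hg : Integrable g μ)
    (hf0 : 0 ≤ᵐ[μ] f) (hg0 : 0 ≤ᵐ[μ] g) : Integrable (fun x => (√(f x) - √(g x)) ^ 2) μ := by
  refine (hf.add hg).mono' ?_ ?_
  · exact ((Real.continuous_sqrt.comp_aestronglyMeasurable hf.1).sub
      (Real.continuous_sqrt.comp_aestronglyMeasurable hg.1)).pow 2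
  · filter_upwards [hf0, hg0] with x hfx hgx
    rw [Real.norm_of_nonneg (sq_nonneg _)]
    exact Real.sq_sqrt_sub_sqrt_le_add hfx hgx

theorem exists_seq_tendsto_ae_zero_of_tendsto_integral {h : ℕ → α → ℝ}
    (hint : ∀ n, Integrable (h n) μ) (h0 : ∀ n, 0 ≤ᵐ[μ] h n)
    (hlim : Tendsto (fun n => ∫ x, h n x ∂μ) atTop (𝓝 0)) :
    ∃ φ : ℕ → ℕ, StrictMono φ ∧ ∀ᵐ x ∂μ, Tendsto (fun k => h (φ k) x) atTop (𝓝 0) := by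
  have hnorm : ∀ n, eLpNorm (h n) 1 μ = ENNReal.ofReal (∫ x, h n x ∂μ) := fun n => by
    rw [eLpNorm_one_eq_lintegral_enorm,
      ofReal_integral_eq_lintegral_ofReal (hint n) (h0 n)]
    exact lintegral_congr_ae <| (h0 n).mono fun x hx => Real.enorm_of_nonneg hx
  have hmeas : TendstoInMeasure μ h atTop 0 :=
    tendstoInMeasure_of_tendsto_eLpNorm one_ne_zero (fun n => (hint n).1)
      aestronglyMeasurable_const (by simpa [hnorm] using ENNReal.tendsto_ofReal hlim)
  exact hmeas.exists_seq_tendsto_ae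

theorem unifIntegrable_of_forall_abs_le_const_add_mul {ι : Type*} {g h : ι → α → ℝ} {B : ℝ}
    (hh : ∀ i, Integrable (h i) μ) (hh0 : ∀ i, 0 ≤ᵐ[μ] h i) (hB : ∀ i, ∫ x, h i x ∂μ ≤ B)
    (hg : ∀ a > 0, ∃ C, ∀ i, ∀ᵐ x ∂μ, |g i x| ≤ C + a * h i x) : UnifIntegrable g 1 μ := by
  intro ε hε
  set a := ε / (2 * (|B| + 1))
  have ha : 0 < a := by positivity
  obtain ⟨C, hC⟩ := hg a (by positivity)
  set δ := ε / (2 * (|C| + 1))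
  refine ⟨δ, by positivity, fun i s hs hμs => ?_⟩
  have hbound : ∀ᵐ x ∂μ.restrict s,
      ‖g i x‖ₑ ≤ ENNReal.ofReal |C| + ENNReal.ofReal (a * h i x) :=
    ae_restrict_of_ae <| (hC i).mono fun x hx => by
      rw [Real.enorm_eq_ofReal_abs]
      exact (ENNReal.ofReal_le_ofReal (hx.trans (by gcongr; exact le_abs_self C))).trans
        ENNReal.ofReal_add_le
  have hh_int : ∫⁻ x, ENNReal.ofReal (a * h i x) ∂μ = ENNReal.ofReal (a * ∫ x, h i x ∂μ) := by
    rw [← integral_const_mul, ofReal_integral_eq_lintegral_ofReal ((hh i).const_mul a)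
      ((hh0 i).mono fun _ hx => mul_nonneg ha.le hx)]
  have hsmall : |C| * δ + a * ∫ x, h i x ∂μ ≤ ε := by
    have hCδ : |C| * δ ≤ ε / 2 := by
      rw [mul_div_assoc', div_le_div_iff₀ (by positivity) two_pos]; nlinarith
    have haB : a * ∫ x, h i x ∂μ ≤ ε / 2 := calc
      a * ∫ x, h i x ∂μ ≤ a * (|B| + 1) := by gcongr; linarith [hB i, le_abs_self B]
      _ = ε / 2 := by simp only [a]; field_simp
    linarith
  calc eLpNorm (s.indicator (g i)) 1 μ = ∫⁻ x in s, ‖g i x‖ₑ ∂μ := by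
        rw [eLpNorm_one_eq_lintegral_enorm, ← lintegral_indicator hs]
        simp_rw [enorm_indicator_eq_indicator_enorm]
    _ ≤ ∫⁻ x in s, ENNReal.ofReal |C| + ENNReal.ofReal (a * h i x) ∂μ := lintegral_mono_ae hbound
    _ = ENNReal.ofReal |C| * μ s + ∫⁻ x in s, ENNReal.ofReal (a * h i x) ∂μ := by
        rw [lintegral_add_left measurable_const, setLIntegral_const]
    _ ≤ ENNReal.ofReal |C| * ENNReal.ofReal δ + ∫⁻ x, ENNReal.ofReal (a * h i x) ∂μ :=
        add_le_add (by gcongr) (setLIntegral_le_lintegral s _)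
    _ = ENNReal.ofReal (|C| * δ + a * ∫ x, h i x ∂μ) := by
        rw [hh_int, ← ENNReal.ofReal_mul (abs_nonneg C), ← ENNReal.ofReal_add (by positivity)
          (mul_nonneg ha.le (integral_nonneg_of_ae (hh0 i)))]
    _ ≤ ENNReal.ofReal ε := ENNReal.ofReal_le_ofReal hsmall

theorem unifIntegrable_mul_log_of_integral_rpow_le {ι : Type*} {p : ℝ} (hp : 1 < p)
    {u : ι → α → ℝ} (h0 : ∀ i, 0 ≤ᵐ[μ] u i) (hup : ∀ i, Integrable (fun x => u i x ^ p) μ)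
    {B : ℝ} (hB : ∀ i, ∫ x, u i x ^ p ∂μ ≤ B) :
    UnifIntegrable (fun i x => u i x * Real.log (u i x)) 1 μ :=
  unifIntegrable_of_forall_abs_le_const_add_mul hup
    (fun i => (h0 i).mono fun _ hx => Real.rpow_nonneg hx p) hB fun _ ha =>
      have ⟨C, hC⟩ := Real.exists_abs_mul_log_le_add_mul_rpow hp ha
      ⟨C, fun i => (h0 i).mono fun _ hx => hC _ hx⟩

theorem tendsto_integral_abs_sub_of_tendsto_ae [IsFiniteMeasure μ] {g : ℕ → α → ℝ} {f : α → ℝ}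
    (hg : ∀ n, AEStronglyMeasurable (g n) μ) (hf : Integrable f μ) (hui : UnifIntegrable g 1 μ)
    (hlim : ∀ᵐ x ∂μ, Tendsto (fun n => g n x) atTop (𝓝 (f x))) :
    Tendsto (fun n => ∫ x, |g n x - f x| ∂μ) atTop (𝓝 0) := by
  have hvitali := tendsto_Lp_finite_of_tendsto_ae le_rfl ENNReal.one_ne_top hg
    (memLp_one_iff_integrable.2 hf) hui hlim
  have hnorm : ∀ n, ∫ x, |g n x - f x| ∂μ = (eLpNorm (g n - f) 1 μ).toReal := fun n => by
    rw [integral_eq_lintegral_of_nonneg_ae (ae_of_all _ fun x => abs_nonneg _)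
      (by fun_prop), eLpNorm_one_eq_lintegral_enorm]
    simp only [Pi.sub_apply, Real.enorm_eq_ofReal_abs]
  simpa [hnorm, Function.comp_def] using (ENNReal.tendsto_toReal ENNReal.zero_ne_top).comp hvitali

end MeasureTheory

theorem entropy_convergence_general
    (T : ℝ)
    (μ : Measure (ℝ × Torus3))
    (hμ : μ = (volume.restrict (Set.Ioo (0 : ℝ) T)).prod (volume : Measure Torus3))
    (f : ℝ × Torus3 → ℝ) (fn : ℕ → ℝ × Torus3 → ℝ)
    (hfm : Measurable f) (hfnm : ∀ n, Measurable (fn n))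
    (hf0 : ∀ᵐ z ∂μ, 0 ≤ f z) (hfn0 : ∀ n, ∀ᵐ z ∂μ, 0 ≤ fn n z)
    (hL2 : Tendsto (fun n => ∫ z, (Real.sqrt (fn n z) - Real.sqrt (f z)) ^ 2 ∂μ)
      atTop (nhds 0))
    (hfn32 : ∀ n, Integrable (fun z => fn n z ^ ((3 : ℝ) / 2)) μ)
    (hB : ∃ B : ℝ, ∀ n, ∫ z, fn n z ^ ((3 : ℝ) / 2) ∂μ ≤ B)
    (hf32 : Integrable (fun z => f z ^ ((3 : ℝ) / 2)) μ) :
    ∃ φ : ℕ → ℕ, StrictMono φ ∧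
      Tendsto (fun k =>
          ∫ z, |fn (φ k) z * Real.log (fn (φ k) z) - f z * Real.log (f z)| ∂μ)
        atTop (nhds 0) := by
  have : Fact (volume (Set.Ioo 0 T) < ⊤) := ⟨measure_Ioo_lt_top⟩
  have : IsFiniteMeasure μ := hμ ▸ inferInstance
  obtain ⟨B, hB⟩ := hB
  have hp : (1 : ℝ) < 3 / 2 := by norm_num
  have hf1 := integrable_of_integrable_rpow hp.le hfm.aestronglyMeasurable hf0 hf32
  have hfn1 n :=
    integrable_of_integrable_rpow hp.le (hfnm n).aestronglyMeasurable (hfn0 n) (hfn32 n)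
  obtain ⟨φ, hφ, hsq⟩ := exists_seq_tendsto_ae_zero_of_tendsto_integral
    (fun n => (hfn1 n).sq_sqrt_sub_sqrt hf1 (hfn0 n) hf0)
    (fun n => ae_of_all _ fun _ => sq_nonneg _) hL2
  have hlim : ∀ᵐ z ∂μ, Tendsto (fun k => fn (φ k) z * Real.log (fn (φ k) z)) atTop
      (𝓝 (f z * Real.log (f z))) := by
    filter_upwards [hsq, hf0, ae_all_iff.2 hfn0] with z hz hfz hfnz
    exact (Real.continuous_mul_log.tendsto _).comp
      (Real.tendsto_of_tendsto_sq_sqrt_sub_sqrt (fun k => hfnz (φ k)) hfz hz)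
  refine ⟨φ, hφ, tendsto_integral_abs_sub_of_tendsto_ae (fun k => by fun_prop)
    (integrable_mul_log_of_integrable_rpow hp hfm.aestronglyMeasurable hf0 hf32)
    ?_ hlim⟩
  exact unifIntegrable_mul_log_of_integral_rpow_le hp (fun k => hfn0 (φ k)) (fun k => hfn32 (φ k))
    (fun k => hB (φ k))

/-- Convergence of entropies (Proposition 5.1): on `(0,T) × 𝕋³`, if `√fₙ → √f` in
`L²`, the `fₙ` are uniformly bounded in `L^{3/2}`, and `f ∈ L^{3/2}`, then along a
subsequence the entropies `∫ fₙ log fₙ` converge to `∫ f log f` in `L¹(0,T)`. -/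
theorem entropy_convergence
    (T : ℝ) (hT : 0 < T)
    (μ : Measure (ℝ × Torus3))
    (hμ : μ = (volume.restrict (Set.Ioo (0 : ℝ) T)).prod (volume : Measure Torus3))
    (f : ℝ × Torus3 → ℝ) (fn : ℕ → ℝ × Torus3 → ℝ)
    (hfm : Measurable f) (hfnm : ∀ n, Measurable (fn n))
    (hf0 : ∀ᵐ z ∂μ, 0 ≤ f z) (hfn0 : ∀ n, ∀ᵐ z ∂μ, 0 ≤ fn n z)
    (hL2 : Tendsto (fun n => ∫ z, (Real.sqrt (fn n z) - Real.sqrt (f z)) ^ 2 ∂μ)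
      atTop (nhds 0))
    (hfn32 : ∀ n, Integrable (fun z => fn n z ^ ((3 : ℝ) / 2)) μ)
    (hB : ∃ B : ℝ, ∀ n, ∫ z, fn n z ^ ((3 : ℝ) / 2) ∂μ ≤ B)
    (hf32 : Integrable (fun z => f z ^ ((3 : ℝ) / 2)) μ) :
    ∃ φ : ℕ → ℕ, StrictMono φ ∧
      Tendsto (fun k =>
          ∫ z, |fn (φ k) z * Real.log (fn (φ k) z) - f z * Real.log (f z)| ∂μ)
        atTop (nhds 0) :=
  entropy_convergence_general T μ hμ f fn hfm hfnm hf0 hfn0 hL2 hfn32 hB hf32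
end

section
/- Let (α, μ) be a measure space and let f, g : α → ℝ be measurable with f ≥ 0 and g ≥ 0 μ-a.e. Assume ∫ (√g − √f)² dμ < ∞, ∫ f^{3/2} dμ < ∞, and ∫ g^{3/2} dμ < ∞. Then the function √f · g^{1/4} · (√g − √f) is μ-integrable and |∫ √f · g^{1/4} · (√g − √f) dμ| ≤ (∫ (√g − √f)² dμ)^{1/2} · (∫ f^{3/2} dμ)^{1/3} · (∫ g^{3/2} dμ)^{1/6}. -/
/-! Pointwise, `|√f · g^{1/4} · (√g − √f)| = ((√g − √f)²)^{1/2} (f^{3/2})^{1/3} (g^{3/2})^{1/6}`,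
so the estimate is the three-function Hölder inequality `∫ F^p G^q H^r ≤ (∫ F)^p (∫ G)^q (∫ H)^r`
for `p + q + r = 1`. Integrability of the product comes for free from weighted AM–GM,
`F^p G^q H^r ≤ pF + qG + rH`. -/

open MeasureTheory Finset

namespace MeasureTheory

variable {α : Type*} [MeasurableSpace α] {μ : Measure α}

section FinsetProduct

variable {ι : Type*} {s : Finset ι} {F : ι → α → ℝ} {p : ι → ℝ}

theorem integrable_prod_rpow (hF0 : ∀ i ∈ s, 0 ≤ᵐ[μ] F i) (hF : ∀ i ∈ s, Integrable (F i) μ)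
    (hp0 : ∀ i ∈ s, 0 ≤ p i) (hp : ∑ i ∈ s, p i = 1) :
    Integrable (fun x => ∏ i ∈ s, F i x ^ p i) μ := by
  refine (integrable_finsetSum s fun i hi => (hF i hi).const_mul (p i)).mono' ?_ ?_
  · exact Finset.aestronglyMeasurable_fun_prod s fun i hi =>
      ((hF i hi).aemeasurable.pow_const _).aestronglyMeasurable
  · filter_upwards [(Filter.eventually_all_finset s).2 hF0] with x hx
    rw [Real.norm_of_nonneg (prod_nonneg fun i hi => Real.rpow_nonneg (hx i hi) _)]
    exact Real.geom_mean_le_arith_mean_weighted s p (F · x) hp0 hp hx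

theorem integral_prod_rpow_le (hF0 : ∀ i ∈ s, 0 ≤ᵐ[μ] F i) (hF : ∀ i ∈ s, Integrable (F i) μ)
    (hp0 : ∀ i ∈ s, 0 ≤ p i) (hp : ∑ i ∈ s, p i = 1) :
    ∫ x, ∏ i ∈ s, F i x ^ p i ∂μ ≤ ∏ i ∈ s, (∫ x, F i x ∂μ) ^ p i := by
  have hF0_all := (Filter.eventually_all_finset s).2 hF0
  have hint_nonneg : ∀ i ∈ s, 0 ≤ ∫ x, F i x ∂μ := fun i hi => integral_nonneg_of_ae (hF0 i hi)
  rw [← ENNReal.ofReal_le_ofReal_iff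
      (prod_nonneg fun i hi => Real.rpow_nonneg (hint_nonneg i hi) _),
    ofReal_integral_eq_lintegral_ofReal (integrable_prod_rpow hF0 hF hp0 hp)
      (hF0_all.mono fun x hx => prod_nonneg fun i hi => Real.rpow_nonneg (hx i hi) _),
    ENNReal.ofReal_prod_of_nonneg fun i hi => Real.rpow_nonneg (hint_nonneg i hi) _]
  calc ∫⁻ x, ENNReal.ofReal (∏ i ∈ s, F i x ^ p i) ∂μ
      = ∫⁻ x, ∏ i ∈ s, ENNReal.ofReal (F i x) ^ p i ∂μ := by
        refine lintegral_congr_ae (hF0_all.mono fun x hx => ?_)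
        dsimp only
        rw [ENNReal.ofReal_prod_of_nonneg fun i hi => Real.rpow_nonneg (hx i hi) _]
        exact prod_congr rfl fun i hi => (ENNReal.ofReal_rpow_of_nonneg (hx i hi) (hp0 i hi)).symm
    _ ≤ ∏ i ∈ s, (∫⁻ x, ENNReal.ofReal (F i x) ∂μ) ^ p i :=
        ENNReal.lintegral_prod_norm_pow_le s
          (fun i hi => (hF i hi).aemeasurable.ennreal_ofReal) hp hp0
    _ = ∏ i ∈ s, ENNReal.ofReal ((∫ x, F i x ∂μ) ^ p i) := by
        refine prod_congr rfl fun i hi => ?_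
        rw [← ofReal_integral_eq_lintegral_ofReal (hF i hi) (hF0 i hi),
          ENNReal.ofReal_rpow_of_nonneg (hint_nonneg i hi) (hp0 i hi)]

end FinsetProduct

theorem integrable_and_integral_rpow_mul_rpow_mul_rpow_le {F G H : α → ℝ}
    (hF0 : 0 ≤ᵐ[μ] F) (hG0 : 0 ≤ᵐ[μ] G) (hH0 : 0 ≤ᵐ[μ] H)
    (hF : Integrable F μ) (hG : Integrable G μ) (hH : Integrable H μ)
    {p q r : ℝ} (hp : 0 ≤ p) (hq : 0 ≤ q) (hr : 0 ≤ r) (hpqr : p + q + r = 1) :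
    Integrable (fun x => F x ^ p * G x ^ q * H x ^ r) μ ∧
      ∫ x, F x ^ p * G x ^ q * H x ^ r ∂μ ≤
        (∫ x, F x ∂μ) ^ p * (∫ x, G x ∂μ) ^ q * (∫ x, H x ∂μ) ^ r := by
  have hF0s : ∀ i ∈ (univ : Finset (Fin 3)), 0 ≤ᵐ[μ] ![F, G, H] i := by
    intro i _
    fin_cases i
    exacts [hF0, hG0, hH0]
  have hFs : ∀ i ∈ (univ : Finset (Fin 3)), Integrable (![F, G, H] i) μ := by
    intro i _
    fin_cases i
    exacts [hF, hG, hH]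
  have hp0s : ∀ i ∈ (univ : Finset (Fin 3)), 0 ≤ ![p, q, r] i := by
    intro i _
    fin_cases i
    exacts [hp, hq, hr]
  have hps : ∑ i, ![p, q, r] i = 1 := by
    rw [Fin.sum_univ_three]
    exact hpqr
  have hint := integrable_prod_rpow hF0s hFs hp0s hps
  have hle := integral_prod_rpow_le hF0s hFs hp0s hps
  simp only [Fin.prod_univ_three] at hint hle
  exact ⟨hint, hle⟩

end MeasureTheory

theorem abs_sqrt_mul_rpow_mul_eq {a b : ℝ} (ha : 0 ≤ a) (hb : 0 ≤ b) (c : ℝ) :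
    |√a * b ^ ((1 : ℝ) / 4) * c| =
      (c ^ 2) ^ ((1 : ℝ) / 2) * (a ^ ((3 : ℝ) / 2)) ^ ((1 : ℝ) / 3) *
        (b ^ ((3 : ℝ) / 2)) ^ ((1 : ℝ) / 6) := by
  rw [← Real.rpow_mul ha, ← Real.rpow_mul hb, ← Real.sqrt_eq_rpow, Real.sqrt_sq_eq_abs,
    Real.sqrt_eq_rpow, abs_mul, abs_mul, abs_of_nonneg (Real.rpow_nonneg ha _),
    abs_of_nonneg (Real.rpow_nonneg hb _)]
  norm_num
  ring

/-- Hölder estimate (exponents 2, 3, 6) for the term `D_k¹`: if `f, g ≥ 0` a.e. with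
`(√g − √f)² ∈ L¹`, `f^{3/2} ∈ L¹`, `g^{3/2} ∈ L¹`, then `√f · g^{1/4} · (√g − √f)`
is integrable and
`|∫ √f g^{1/4} (√g − √f)| ≤ (∫ (√g−√f)²)^{1/2} (∫ f^{3/2})^{1/3} (∫ g^{3/2})^{1/6}`. -/
theorem holder_estimate_Dk1
    (α : Type*) [MeasurableSpace α] (μ : Measure α)
    (f g : α → ℝ) (hfm : Measurable f) (hgm : Measurable g)
    (hf0 : ∀ᵐ x ∂μ, 0 ≤ f x) (hg0 : ∀ᵐ x ∂μ, 0 ≤ g x)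
    (h2 : Integrable (fun x => (Real.sqrt (g x) - Real.sqrt (f x)) ^ 2) μ)
    (hf32 : Integrable (fun x => f x ^ ((3 : ℝ) / 2)) μ)
    (hg32 : Integrable (fun x => g x ^ ((3 : ℝ) / 2)) μ) :
    Integrable (fun x =>
        Real.sqrt (f x) * g x ^ ((1 : ℝ) / 4) * (Real.sqrt (g x) - Real.sqrt (f x))) μ ∧
      |∫ x, Real.sqrt (f x) * g x ^ ((1 : ℝ) / 4) *
          (Real.sqrt (g x) - Real.sqrt (f x)) ∂μ| ≤
        (∫ x, (Real.sqrt (g x) - Real.sqrt (f x)) ^ 2 ∂μ) ^ ((1 : ℝ) / 2) *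
          (∫ x, f x ^ ((3 : ℝ) / 2) ∂μ) ^ ((1 : ℝ) / 3) *
          (∫ x, g x ^ ((3 : ℝ) / 2) ∂μ) ^ ((1 : ℝ) / 6) := by
  obtain ⟨hint, hle⟩ := integrable_and_integral_rpow_mul_rpow_mul_rpow_le
    (p := 1 / 2) (q := 1 / 3) (r := 1 / 6) (Filter.Eventually.of_forall fun x => sq_nonneg _)
    (hf0.mono fun x hx => Real.rpow_nonneg hx _) (hg0.mono fun x hx => Real.rpow_nonneg hx _)
    h2 hf32 hg32 (by norm_num) (by norm_num) (by norm_num) (by norm_num)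
  have habs : (fun x => |√(f x) * g x ^ ((1 : ℝ) / 4) * (√(g x) - √(f x))|) =ᵐ[μ]
      fun x => ((√(g x) - √(f x)) ^ 2) ^ ((1 : ℝ) / 2) * (f x ^ ((3 : ℝ) / 2)) ^ ((1 : ℝ) / 3) *
        (g x ^ ((3 : ℝ) / 2)) ^ ((1 : ℝ) / 6) := by
    filter_upwards [hf0, hg0] with x hfx hgx
    exact abs_sqrt_mul_rpow_mul_eq hfx hgx _
  have hmeas : AEStronglyMeasurable
      (fun x => √(f x) * g x ^ ((1 : ℝ) / 4) * (√(g x) - √(f x))) μ := by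
    fun_prop
  refine ⟨(integrable_norm_iff hmeas).1 (hint.congr habs.symm), ?_⟩
  calc _ ≤ ∫ x, |√(f x) * g x ^ ((1 : ℝ) / 4) * (√(g x) - √(f x))| ∂μ :=
        abs_integral_le_integral_abs
    _ = _ := integral_congr_ae habs
    _ ≤ _ := hle
end

section
/- Let (α, μ) be a measure space and let f, g : α → ℝ be measurable with f ≥ 0 and g ≥ 0 μ-a.e. Assume ∫ (√g − √f)² dμ < ∞ and ∫ f^{3/2} dμ < ∞. Then the function f · (g^{1/4} − f^{1/4}) is μ-integrable and |∫ f · (g^{1/4} − f^{1/4}) dμ| ≤ (∫ (√g − √f)² dμ)^{1/2} · (∫ f^{3/2} dμ)^{1/2}. -/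
/-!
With `s = f^{1/4}` and `t = g^{1/4}` one has `s⁴ |t - s| ≤ s³ (t + s) |t - s| = s³ |t² - s²|`, that is
`f |g^{1/4} - f^{1/4}| ≤ f^{3/4} |√g - √f|`. The right-hand side is a product of two `L²` functions,
whose squared norms are `∫ (√g - √f)²` and `∫ f^{3/2}`, so Cauchy–Schwarz gives both claims.
-/

open MeasureTheory

theorem mul_abs_sub_le_abs_sq_sub {x y : ℝ} (hx : 0 ≤ x) (hy : 0 ≤ y) :
    x * |y - x| ≤ |y ^ 2 - x ^ 2| := by
  rw [show y ^ 2 - x ^ 2 = (y + x) * (y - x) by ring, abs_mul, abs_of_nonneg (add_nonneg hy hx)]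
  exact mul_le_mul_of_nonneg_right (by linarith) (abs_nonneg _)

theorem abs_pow_four_mul_sub_le {s t : ℝ} (hs : 0 ≤ s) (ht : 0 ≤ t) :
    |s ^ 4 * (t - s)| ≤ |t ^ 2 - s ^ 2| * s ^ 3 := by
  calc |s ^ 4 * (t - s)| = s ^ 3 * (s * |t - s|) := by
        rw [abs_mul, abs_of_nonneg (by positivity)]; ring
    _ ≤ s ^ 3 * |t ^ 2 - s ^ 2| :=
        mul_le_mul_of_nonneg_left (mul_abs_sub_le_abs_sq_sub hs ht) (by positivity)
    _ = |t ^ 2 - s ^ 2| * s ^ 3 := mul_comm _ _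

theorem abs_mul_rpow_quarter_sub_le {a b : ℝ} (ha : 0 ≤ a) (hb : 0 ≤ b) :
    |a * (b ^ ((1 : ℝ) / 4) - a ^ ((1 : ℝ) / 4))| ≤
      |Real.sqrt b - Real.sqrt a| * a ^ ((3 : ℝ) / 4) := by
  have hpow {c : ℝ} (hc : 0 ≤ c) (n : ℕ) : c ^ ((n : ℝ) / 4) = (c ^ ((1 : ℝ) / 4)) ^ n := by
    rw [← Real.rpow_mul_natCast hc]; ring_nf
  have hsqrt {c : ℝ} (hc : 0 ≤ c) : (c ^ ((1 : ℝ) / 4)) ^ 2 = Real.sqrt c := by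
    rw [Real.sqrt_eq_rpow, ← hpow hc]; norm_num
  have hfour : (a ^ ((1 : ℝ) / 4)) ^ 4 = a := by rw [← hpow ha]; norm_num
  have hthree : (a ^ ((1 : ℝ) / 4)) ^ 3 = a ^ ((3 : ℝ) / 4) := by rw [← hpow ha]; norm_num
  have := abs_pow_four_mul_sub_le (Real.rpow_nonneg ha ((1 : ℝ) / 4))
    (Real.rpow_nonneg hb ((1 : ℝ) / 4))
  rwa [hfour, hthree, hsqrt ha, hsqrt hb] at this

section

variable {α : Type*} [MeasurableSpace α] {μ : Measure α}

theorem integrable_and_abs_integral_le_of_abs_le_mul {h u v : α → ℝ}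
    (hh : AEStronglyMeasurable h μ) (hu0 : 0 ≤ᵐ[μ] u) (hv0 : 0 ≤ᵐ[μ] v)
    (hu : MemLp u 2 μ) (hv : MemLp v 2 μ) (hle : ∀ᵐ x ∂μ, |h x| ≤ u x * v x) :
    Integrable h μ ∧
      |∫ x, h x ∂μ| ≤ (∫ x, u x ^ 2 ∂μ) ^ ((1 : ℝ) / 2) * (∫ x, v x ^ 2 ∂μ) ^ ((1 : ℝ) / 2) := by
  have huv : Integrable (fun x => u x * v x) μ := hu.integrable_mul hv
  have hint : Integrable h μ := huv.mono' hh (by simpa only [Real.norm_eq_abs] using hle)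
  refine ⟨hint, ?_⟩
  calc |∫ x, h x ∂μ| ≤ ∫ x, |h x| ∂μ := abs_integral_le_integral_abs
    _ ≤ ∫ x, u x * v x ∂μ := integral_mono_ae hint.abs huv hle
    _ ≤ _ := by
        simpa only [Real.rpow_two] using integral_mul_le_Lp_mul_Lq_of_nonneg
          Real.HolderConjugate.two_two hu0 hv0 (by simpa using hu) (by simpa using hv)

end

/-- Estimate for the term `D_k²`: if `f, g ≥ 0` a.e. with `(√g − √f)² ∈ L¹` and
`f^{3/2} ∈ L¹`, then `f · (g^{1/4} − f^{1/4})` is integrable and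
`|∫ f (g^{1/4} − f^{1/4})| ≤ (∫ (√g−√f)²)^{1/2} (∫ f^{3/2})^{1/2}`. -/
theorem holder_estimate_Dk2
    (α : Type*) [MeasurableSpace α] (μ : Measure α)
    (f g : α → ℝ) (hfm : Measurable f) (hgm : Measurable g)
    (hf0 : ∀ᵐ x ∂μ, 0 ≤ f x) (hg0 : ∀ᵐ x ∂μ, 0 ≤ g x)
    (h2 : Integrable (fun x => (Real.sqrt (g x) - Real.sqrt (f x)) ^ 2) μ)
    (hf32 : Integrable (fun x => f x ^ ((3 : ℝ) / 2)) μ) :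
    Integrable (fun x => f x * (g x ^ ((1 : ℝ) / 4) - f x ^ ((1 : ℝ) / 4))) μ ∧
      |∫ x, f x * (g x ^ ((1 : ℝ) / 4) - f x ^ ((1 : ℝ) / 4)) ∂μ| ≤
        (∫ x, (Real.sqrt (g x) - Real.sqrt (f x)) ^ 2 ∂μ) ^ ((1 : ℝ) / 2) *
          (∫ x, f x ^ ((3 : ℝ) / 2) ∂μ) ^ ((1 : ℝ) / 2) := by
  have hsq : (fun x => (f x ^ ((3 : ℝ) / 4)) ^ 2) =ᵐ[μ] fun x => f x ^ ((3 : ℝ) / 2) := by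
    filter_upwards [hf0] with x hx
    rw [← Real.rpow_mul_natCast hx]; norm_num
  have hu : MemLp (fun x => |Real.sqrt (g x) - Real.sqrt (f x)|) 2 μ := by
    rw [memLp_two_iff_integrable_sq (by fun_prop)]
    simpa only [sq_abs] using h2
  have hv : MemLp (fun x => f x ^ ((3 : ℝ) / 4)) 2 μ := by
    rw [memLp_two_iff_integrable_sq (hfm.pow_const _).aestronglyMeasurable]
    exact hf32.congr hsq.symm
  have hle : ∀ᵐ x ∂μ, |f x * (g x ^ ((1 : ℝ) / 4) - f x ^ ((1 : ℝ) / 4))| ≤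
      |Real.sqrt (g x) - Real.sqrt (f x)| * f x ^ ((3 : ℝ) / 4) := by
    filter_upwards [hf0, hg0] with x hfx hgx
    exact abs_mul_rpow_quarter_sub_le hfx hgx
  obtain ⟨hint, hbound⟩ := integrable_and_abs_integral_le_of_abs_le_mul (by fun_prop)
    (.of_forall fun _ => abs_nonneg _) (by filter_upwards [hf0] with x hx using Real.rpow_nonneg hx _)
    hu hv hle
  simp only [sq_abs] at hbound
  exact ⟨hint, integral_congr_ae hsq ▸ hbound⟩
end
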